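/- arXiv:1612.05717 — 2 statements merged into one kernel-verified Lean document; each statement's English description precedes it below -/
import Mathlib

section
/- Let Q be a nonzero polynomial in d variables over a field F with Taylor expansion Q = Σ_β c_β x_1^{β_1} ··· x_{d-1}^{β_{d-1}} (x_d - p)^{β_d} around the point P = (0,...,0,p). Suppose β_0 is a multi-index with c_{β_0} ≠ 0 and |β_0| minimal among all β with c_β ≠ 0. Then the (P, l)-multiplicity of Q along the x_d-axis l is at least β_{0,d}. -/
open MvPolynomial

noncomputable def sliceAt {F : Type} [Field F] {n : ℕ}
    (Q : MvPolynomial (Fin (n + 1)) F) (α : Fin n → ℕ) : Polynomial F :=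
  ∑ k ∈ Finset.range (Q.totalDegree + 1),
    Polynomial.C (MvPolynomial.coeff (Finsupp.equivFunOnFinite.symm (Fin.snoc α k)) Q) *
      Polynomial.X ^ k

def IsLowest {F : Type} [Field F] {n : ℕ}
    (Q : MvPolynomial (Fin (n + 1)) F) (α : Fin n → ℕ) : Prop :=
  sliceAt Q α ≠ 0 ∧ ∀ α' : Fin n → ℕ, sliceAt Q α' ≠ 0 → ∑ i, α i ≤ ∑ i, α' i

noncomputable def axisMult {F : Type} [Field F] {n : ℕ}
    (Q : MvPolynomial (Fin (n + 1)) F) (p : F) : ℕ :=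
  sInf {m : ℕ | ∃ α : Fin n → ℕ, IsLowest Q α ∧ m = (sliceAt Q α).rootMultiplicity p}

/-- The substitution `x_d ↦ x_d + p`, so that the coefficients of
`shiftLast p Q` are the Taylor coefficients of `Q` around `(0, …, 0, p)`. -/
noncomputable def shiftLast {F : Type} [Field F] {n : ℕ} (p : F)
    (Q : MvPolynomial (Fin (n + 1)) F) : MvPolynomial (Fin (n + 1)) F :=
  MvPolynomial.aeval
    (fun i : Fin (n + 1) =>
      if i = Fin.last n then MvPolynomial.X i + MvPolynomial.C p else MvPolynomial.X i) Q

/-!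
View `Q` as a polynomial in `x_1, …, x_{d-1}` with coefficients in `F[x_d]`: the slices `f_α` are
its coefficients, and the substitution `x_d ↦ x_d + p` acts on them coefficientwise as the Taylor
shift at `p`. So the Taylor coefficient of `f_α` at `(x_d - p)^j` is the coefficient `c_{(α, j)}`.
Write `β₀ = (α₀, m)`; then `f_{α₀} ≠ 0`, so lowest tuples exist and every lowest `α` has
`|α| ≤ |α₀|`. For such `α` and `j < m`, `c_{(α, j)} ≠ 0` would give `|α| + j < |α₀| + m = |β₀|`,
against the minimality of `|β₀|`; hence `(x_d - p)^m ∣ f_α`.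
-/

namespace Polynomial

theorem le_rootMultiplicity_of_coeff_taylor_eq_zero {R : Type*} [CommRing R] {f : R[X]}
    {r : R} {m : ℕ} (hf : f ≠ 0) (h : ∀ j < m, (taylor r f).coeff j = 0) :
    m ≤ f.rootMultiplicity r := by
  rw [rootMultiplicity_eq_natTrailingDegree, ← taylor_apply]
  exact le_natTrailingDegree ((taylor_eq_zero r f).not.mpr hf) h

end Polynomial

namespace MvPolynomial

variable {R : Type*} [CommSemiring R] {n : ℕ}

noncomputable def lastVarToCoeffs :
    MvPolynomial (Fin (n + 1)) R →ₐ[R] MvPolynomial (Fin n) (Polynomial R) :=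
  aeval (Fin.lastCases (C Polynomial.X) X)

theorem lastVarToCoeffs_monomial (v : Fin (n + 1) →₀ ℕ) (c : R) :
    lastVarToCoeffs (monomial v c) =
      monomial (Finsupp.equivFunOnFinite.symm (Fin.init v))
        (Polynomial.monomial (v (Fin.last n)) c) := by
  rw [lastVarToCoeffs, aeval_monomial, Finsupp.prod_fintype _ _ (fun _ => pow_zero _),
    Fin.prod_univ_castSucc, monomial_eq, Finsupp.prod_fintype _ _ (fun _ => pow_zero _)]
  simp [Fin.init, ← Polynomial.C_mul_X_pow_eq_monomial]
  ring

theorem coeff_coeff_lastVarToCoeffs (Q : MvPolynomial (Fin (n + 1)) R) (α : Fin n → ℕ) (k : ℕ) :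
    ((lastVarToCoeffs Q).coeff (Finsupp.equivFunOnFinite.symm α)).coeff k =
      Q.coeff (Finsupp.equivFunOnFinite.symm (Fin.snoc α k)) := by
  classical
  induction Q using MvPolynomial.induction_on' with
  | monomial v c =>
    obtain ⟨γ, m, rfl⟩ : ∃ γ m, v = Finsupp.equivFunOnFinite.symm (Fin.snoc γ m) :=
      ⟨Fin.init v, v (Fin.last n), by simp⟩
    by_cases hγ : γ = α <;>
      simp [hγ, lastVarToCoeffs_monomial, coeff_monomial, Polynomial.coeff_monomial, Fin.snoc_inj]
  | add P Q hP hQ => simp only [map_add, coeff_add, Polynomial.coeff_add, hP, hQ]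

end MvPolynomial

open Polynomial (taylor taylorAlgHom)

section Slices

variable {F : Type} [Field F] {n : ℕ}

theorem sliceAt_eq_coeff_lastVarToCoeffs (Q : MvPolynomial (Fin (n + 1)) F) (α : Fin n → ℕ) :
    sliceAt Q α = (lastVarToCoeffs Q).coeff (Finsupp.equivFunOnFinite.symm α) := by
  classical
  ext k
  rw [coeff_coeff_lastVarToCoeffs, sliceAt, Polynomial.finsetSum_coeff]
  simp only [Polynomial.coeff_C_mul_X_pow, Finset.sum_ite_eq, Finset.mem_range, ite_eq_left_iff,
    not_lt]
  intro hk
  refine (notMem_support_iff.mp fun hmem => ?_).symm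
  have hdeg := le_totalDegree hmem
  rw [Finsupp.sum_fintype _ _ fun _ => rfl] at hdeg
  simp only [Finsupp.equivFunOnFinite_symm_apply_apply, Fin.sum_snoc] at hdeg
  omega

theorem lastVarToCoeffs_shiftLast (p : F) (Q : MvPolynomial (Fin (n + 1)) F) :
    lastVarToCoeffs (shiftLast p Q) =
      map (taylorAlgHom p : Polynomial F →+* Polynomial F) (lastVarToCoeffs Q) := by
  suffices (lastVarToCoeffs.comp (aeval fun i : Fin (n + 1) =>
      if i = Fin.last n then X i + MvPolynomial.C p else X i)) =
      (mapAlgHom (taylorAlgHom p)).comp lastVarToCoeffs from DFunLike.congr_fun this Q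
  refine MvPolynomial.algHom_ext fun i => ?_
  induction i using Fin.lastCases <;> simp [lastVarToCoeffs]

theorem coeff_shiftLast (p : F) (Q : MvPolynomial (Fin (n + 1)) F) (α : Fin n → ℕ) (k : ℕ) :
    (shiftLast p Q).coeff (Finsupp.equivFunOnFinite.symm (Fin.snoc α k)) =
      (taylor p (sliceAt Q α)).coeff k := by
  rw [← coeff_coeff_lastVarToCoeffs, lastVarToCoeffs_shiftLast, MvPolynomial.coeff_map,
    sliceAt_eq_coeff_lastVarToCoeffs]
  rfl

theorem exists_isLowest {Q : MvPolynomial (Fin (n + 1)) F} {α : Fin n → ℕ}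
    (h : sliceAt Q α ≠ 0) : ∃ α', IsLowest Q α' := by
  obtain ⟨α', hα', hmin⟩ :=
    (measure fun α : Fin n → ℕ => ∑ i, α i).wf.has_min {α | sliceAt Q α ≠ 0} ⟨α, h⟩
  exact ⟨α', hα', fun β hβ => not_lt.mp (hmin β hβ)⟩

end Slices

theorem stmt3_general {F : Type} [Field F] {n : ℕ}
    (Q : MvPolynomial (Fin (n + 1)) F) (p : F)
    (β₀ : Fin (n + 1) → ℕ)
    (hβ₀ : MvPolynomial.coeff (Finsupp.equivFunOnFinite.symm β₀) (shiftLast p Q) ≠ 0)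
    (hmin : ∀ β : Fin (n + 1) → ℕ,
      MvPolynomial.coeff (Finsupp.equivFunOnFinite.symm β) (shiftLast p Q) ≠ 0 →
      ∑ i, β₀ i ≤ ∑ i, β i) :
    β₀ (Fin.last n) ≤ axisMult Q p := by
  obtain ⟨α₀, m, rfl⟩ : ∃ α₀ m, β₀ = Fin.snoc α₀ m :=
    ⟨Fin.init β₀, _, (Fin.snoc_init_self β₀).symm⟩
  rw [coeff_shiftLast] at hβ₀
  have hα₀ : sliceAt Q α₀ ≠ 0 := fun h => hβ₀ (by simp [h])
  obtain ⟨α₁, hα₁⟩ := exists_isLowest hα₀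
  refine le_csInf ⟨_, α₁, hα₁, rfl⟩ ?_
  rintro _ ⟨α, ⟨hα, hlow⟩, rfl⟩
  refine Polynomial.le_rootMultiplicity_of_coeff_taylor_eq_zero hα fun j hj => ?_
  by_contra hcoeff
  rw [← coeff_shiftLast] at hcoeff
  have hβ₀_le := hmin _ hcoeff
  have hα_le := hlow α₀ hα₀
  simp only [Fin.sum_snoc, Fin.snoc_last] at hβ₀_le hj
  omega

/-- If `β₀` has nonzero Taylor coefficient of `Q` around `P = (0, …, 0, p)` and
`|β₀|` is minimal, then the `(P, x_d-axis)`-multiplicity of `Q` is ≥ `β₀_d`. -/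
theorem stmt3 {F : Type} [Field F] {n : ℕ} (hn : 1 ≤ n)
    (Q : MvPolynomial (Fin (n + 1)) F) (hQ : Q ≠ 0) (p : F)
    (β₀ : Fin (n + 1) → ℕ)
    (hβ₀ : MvPolynomial.coeff (Finsupp.equivFunOnFinite.symm β₀) (shiftLast p Q) ≠ 0)
    (hmin : ∀ β : Fin (n + 1) → ℕ,
      MvPolynomial.coeff (Finsupp.equivFunOnFinite.symm β) (shiftLast p Q) ≠ 0 →
      ∑ i, β₀ i ≤ ∑ i, β i) :
    β₀ (Fin.last n) ≤ axisMult Q p :=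
  stmt3_general Q p β₀ hβ₀ hmin
end

section
/- Let L = (l_1,...,l_N) be a finite sequence of lines in F^d and P ∈ F^d. For 1 ≤ j ≤ d define r_j(P, L) as the minimum over all (j-1)-dimensional linear subspaces V of F^d of the number of indices i with P ∈ l_i and l_i not parallel to V. Let M(P) be the number of ordered d-tuples of indices (i_1,...,i_d) such that l_{i_1},...,l_{i_d} pass through P with linearly independent directions. Then c(d) * Π_{j=1}^d r_j(P,L) ≤ M(P) ≤ C(d) * Π_{j=1}^d r_j(P,L). -/
def IsLine {F : Type} [Field F] {d : ℕ} (s : Set (Fin d → F)) : Prop :=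
  ∃ a v : Fin d → F, v ≠ 0 ∧ s = {x | ∃ t : F, x = a + t • v}

def lineThrough {F : Type} [Field F] {d : ℕ} (P v : Fin d → F) : Set (Fin d → F) :=
  {x | ∃ t : F, x = P + t • v}

/-- A line is parallel to a linear subspace `V` if its direction lies in `V`. -/
def LineParallel {F : Type} [Field F] {d : ℕ} (s : Set (Fin d → F))
    (V : Submodule F (Fin d → F)) : Prop :=
  ∃ a v : Fin d → F, v ≠ 0 ∧ s = {x | ∃ t : F, x = a + t • v} ∧ v ∈ V

/-- The `j`-th minimum `r_j(P, L)`: the minimum over `(j-1)`-dimensional linear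
subspaces `V` of the number of indices `i` with `P ∈ l_i` and `l_i` not
parallel to `V`. -/
noncomputable def jthMin {F : Type} [Field F] {d N : ℕ}
    (l : Fin N → Set (Fin d → F)) (P : Fin d → F) (j : ℕ) : ℕ :=
  sInf {k : ℕ | ∃ V : Submodule F (Fin d → F), Module.finrank F V = j - 1 ∧
    k = Set.ncard {i : Fin N | P ∈ l i ∧ ¬ LineParallel (l i) V}}

noncomputable def jointMult {F : Type} [Field F] {d N : ℕ}
    (l : Fin N → Set (Fin d → F)) (P : Fin d → F) : ℕ :=
  Set.ncard {ι : Fin d → Fin N |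
    ∃ v : Fin d → (Fin d → F), LinearIndependent F v ∧
      ∀ j, l (ι j) = lineThrough P (v j)}

/-!
Give every line through `P` a direction `u i`, and every other line the direction `0`. As `0`
lies in every subspace and in no independent family, `M(P)` counts the `d`-tuples `τ` with
`u ∘ τ` linearly independent, and `r_j` is the minimum of `#{i | u i ∉ V}` over
`(j-1)`-dimensional `V`.

Lower bound, with `c = 1`: an independent `k`-tuple extends to an independent `(k+1)`-tuple by any
`i` with `u i` outside its `k`-dimensional span, and there are at least `r_{k+1}` such `i`.

Upper bound, with `C = d!`: fix `W_j` of dimension `j - 1` realising `r_j`. At most `j - 1`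
vectors of an independent tuple lie in `W_j`, so by Hall's theorem the tuple can be reordered
to have its `j`-th vector outside `W_j` for every `j`; hence every independent tuple is a
permutation of an element of `∏_j {i | u i ∉ W_j}`.
-/

open Finset Module
open scoped Nat

section IndependentTuples

variable (F : Type*) {E ι : Type*} [Field F] [AddCommGroup E] [Module F E] [Fintype ι]

open Classical in
noncomputable def indepTuples (u : ι → E) (n : ℕ) : Finset (Fin n → ι) :=
  {τ | LinearIndependent F (u ∘ τ)}

variable {F}

theorem mem_indepTuples {u : ι → E} {n : ℕ} {τ : Fin n → ι} :
    τ ∈ indepTuples F u n ↔ LinearIndependent F (u ∘ τ) := by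
  simp [indepTuples]

open Classical in
theorem card_indepTuples_mul_le_card_indepTuples_succ (u : ι → E) {n r : ℕ}
    (hr : ∀ V : Submodule F E, finrank F V = n → r ≤ #{i | u i ∉ V}) :
    #(indepTuples F u n) * r ≤ #(indepTuples F u (n + 1)) := by
  let extensions (τ : Fin n → ι) : Finset ι :=
    {i | u i ∉ Submodule.span F (Set.range (u ∘ τ))}
  calc #(indepTuples F u n) * r
      ≤ ∑ τ ∈ indepTuples F u n, #(extensions τ) := by
        rw [← smul_eq_mul]
        refine card_nsmul_le_sum _ _ _ fun τ hτ => hr _ ?_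
        rw [finrank_span_eq_card (mem_indepTuples.1 hτ), Fintype.card_fin]
    _ = #((indepTuples F u n).sigma extensions) := (card_sigma _ _).symm
    _ ≤ #(indepTuples F u (n + 1)) := by
      refine card_le_card_of_injOn (fun p => Fin.snoc p.1 p.2) (fun p hp => ?_) ?_
      · obtain ⟨hτ, hi⟩ := mem_sigma.1 hp
        rw [mem_coe, mem_indepTuples, Fin.comp_snoc, linearIndependent_finSnoc]
        exact ⟨mem_indepTuples.1 hτ, (mem_filter.1 hi).2⟩
      · intro p _ q _ h
        obtain ⟨h1, h2⟩ := Fin.snoc_injective2 h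
        exact Sigma.ext h1 (heq_of_eq h2)

open Classical in
theorem prod_le_card_indepTuples (u : ι → E) (r : ℕ → ℕ) (n : ℕ)
    (hr : ∀ k < n, ∀ V : Submodule F E, finrank F V = k → r k ≤ #{i | u i ∉ V}) :
    ∏ k ∈ range n, r k ≤ #(indepTuples F u n) := by
  induction n with
  | zero => exact card_pos.2 ⟨finZeroElim, mem_indepTuples.2 linearIndependent_empty_type⟩
  | succ n ih =>
    calc ∏ k ∈ range (n + 1), r k = (∏ k ∈ range n, r k) * r n := prod_range_succ _ _
      _ ≤ #(indepTuples F u n) * r n := Nat.mul_le_mul_right _ (ih fun k hk => hr k (by omega))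
      _ ≤ #(indepTuples F u (n + 1)) :=
        card_indepTuples_mul_le_card_indepTuples_succ u (hr n n.lt_add_one)

variable [FiniteDimensional F E]

open Classical in
theorem LinearIndependent.card_filter_mem_le_finrank {v : ι → E} (hv : LinearIndependent F v)
    (W : Submodule F E) : #{i | v i ∈ W} ≤ finrank F W := by
  let s : Finset ι := {i | v i ∈ W}
  have hspan : Submodule.span F (Set.range (v ∘ ((↑) : s → ι))) ≤ W :=
    Submodule.span_le.2 (Set.range_subset_iff.2 fun i => (mem_filter.1 i.2).2)
  calc #s = finrank F (Submodule.span F (Set.range (v ∘ ((↑) : s → ι)))) := by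
        rw [finrank_span_eq_card (hv.comp _ Subtype.val_injective), Fintype.card_coe]
    _ ≤ finrank F W := Submodule.finrank_mono hspan

open Classical in
theorem LinearIndependent.exists_perm_forall_notMem {n : ℕ} {v : Fin n → E}
    (hv : LinearIndependent F v) (W : ℕ → Submodule F E) (hW : ∀ j < n, finrank F (W j) ≤ j) :
    ∃ σ : Equiv.Perm (Fin n), ∀ j : Fin n, v (σ j) ∉ W j := by
  let avoiding (j : Fin n) : Finset (Fin n) := {k | v k ∉ W j}
  have card_avoiding (j : Fin n) : n - j ≤ #(avoiding j) := by
    show n - j ≤ #{k | v k ∉ W j}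
    have hsplit := card_filter_add_card_filter_not (s := univ) (fun k => v k ∈ W j)
    have := hv.card_filter_mem_le_finrank (W j)
    have := hW j j.isLt
    rw [card_univ, Fintype.card_fin] at hsplit
    omega
  have hall (J : Finset (Fin n)) : #J ≤ #(J.biUnion avoiding) := by
    rcases J.eq_empty_or_nonempty with rfl | hJ
    · simp
    calc #J ≤ #(Ici (J.min' hJ)) := card_le_card fun j hj => mem_Ici.2 (J.min'_le j hj)
      _ = n - J.min' hJ := Fin.card_Ici _
      _ ≤ #(avoiding (J.min' hJ)) := card_avoiding _
      _ ≤ #(J.biUnion avoiding) := card_le_card (subset_biUnion_of_mem avoiding (J.min'_mem hJ))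
  obtain ⟨f, hf, hfA⟩ := (all_card_le_biUnion_card_iff_exists_injective avoiding).1 hall
  exact ⟨Equiv.ofBijective f hf.bijective_of_finite, fun j => (mem_filter.1 (hfA j)).2⟩

open Classical in
theorem card_indepTuples_le (u : ι → E) (n : ℕ) (W : ℕ → Submodule F E)
    (hW : ∀ j < n, finrank F (W j) ≤ j) :
    #(indepTuples F u n) ≤ n ! * ∏ j ∈ range n, #{i | u i ∉ W j} := by
  let B := Fintype.piFinset fun j : Fin n => ({i | u i ∉ W j} : Finset ι)
  have hcover : indepTuples F u n ⊆
      univ.biUnion fun σ : Equiv.Perm (Fin n) => B.image (· ∘ σ.symm) := by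
    intro τ hτ
    obtain ⟨σ, hσ⟩ := (mem_indepTuples.1 hτ).exists_perm_forall_notMem W hW
    refine mem_biUnion.2 ⟨σ, mem_univ _, mem_image.2 ⟨τ ∘ σ, ?_, ?_⟩⟩
    · exact Fintype.mem_piFinset.2 fun j => mem_filter.2 ⟨mem_univ _, hσ j⟩
    · ext j
      simp
  calc #(indepTuples F u n)
      ≤ ∑ σ : Equiv.Perm (Fin n), #(B.image (· ∘ σ.symm)) :=
        (card_le_card hcover).trans card_biUnion_le
    _ ≤ ∑ _σ : Equiv.Perm (Fin n), #B := sum_le_sum fun _ _ => card_image_le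
    _ = n ! * ∏ j ∈ range n, #{i | u i ∉ W j} := by
      rw [sum_const, card_univ, Fintype.card_perm, Fintype.card_fin, smul_eq_mul,
        Fintype.card_piFinset, Fin.prod_univ_eq_prod_range (fun j => #{i | u i ∉ W j})]

end IndependentTuples

theorem exists_submodule_finrank_eq {F E : Type*} [Field F] [AddCommGroup E] [Module F E]
    [FiniteDimensional F E] {j : ℕ} (hj : j ≤ finrank F E) :
    ∃ V : Submodule F E, finrank F V = j := by
  let b := finBasis F E
  refine ⟨Submodule.span F (Set.range (b ∘ Fin.castLE hj)), ?_⟩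
  rw [finrank_span_eq_card (b.linearIndependent.comp _ (Fin.castLE_injective hj)),
    Fintype.card_fin]

theorem prod_Icc_one_eq_prod_range {M : Type*} [CommMonoid M] (f : ℕ → M) (n : ℕ) :
    ∏ j ∈ Icc 1 n, f j = ∏ j ∈ range n, f (j + 1) := by
  rw [range_eq_Ico, prod_Ico_add', ← Ico_add_one_right_eq_Icc, zero_add]

section Lines

variable {F : Type} [Field F] {d : ℕ}

theorem mem_lineThrough_self (P v : Fin d → F) : P ∈ lineThrough P v :=
  ⟨0, by simp⟩

theorem setOf_eq_lineThrough {a v P : Fin d → F} (hP : P ∈ {x | ∃ t : F, x = a + t • v}) :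
    {x | ∃ t : F, x = a + t • v} = lineThrough P v := by
  obtain ⟨t₀, rfl⟩ := hP
  ext x
  constructor
  · rintro ⟨t, rfl⟩
    exact ⟨t - t₀, by module⟩
  · rintro ⟨t, rfl⟩
    exact ⟨t₀ + t, by module⟩

theorem exists_unit_smul_of_lineThrough_eq {P v w : Fin d → F} (hw : w ≠ 0)
    (h : lineThrough P v = lineThrough P w) : ∃ c : Fˣ, w = c • v := by
  obtain ⟨t, ht⟩ : P + w ∈ lineThrough P v := h ▸ ⟨1, by simp⟩
  have hwt : w = t • v := add_left_cancel ht
  exact ⟨Units.mk0 t (by rintro rfl; simp [hwt] at hw), hwt⟩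

theorem lineParallel_lineThrough_iff {P u : Fin d → F} (hu : u ≠ 0)
    (V : Submodule F (Fin d → F)) : LineParallel (lineThrough P u) V ↔ u ∈ V := by
  refine ⟨fun ⟨a, w, hw, heq, hwV⟩ => ?_, fun hV => ⟨P, u, hu, rfl, hV⟩⟩
  have hP : P ∈ {x | ∃ t : F, x = a + t • w} := heq ▸ mem_lineThrough_self P u
  obtain ⟨c, rfl⟩ := exists_unit_smul_of_lineThrough_eq hw (heq.trans (setOf_eq_lineThrough hP))
  exact (Submodule.smul_mem_iff' V c).1 hwV

theorem IsLine.exists_direction {s : Set (Fin d → F)} (hs : IsLine s) (P : Fin d → F) :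
    ∃ u : Fin d → F, (u ≠ 0 ↔ P ∈ s) ∧ (P ∈ s → s = lineThrough P u) := by
  by_cases hP : P ∈ s
  · obtain ⟨a, v, hv, rfl⟩ := hs
    exact ⟨v, iff_of_true hv hP, fun _ => setOf_eq_lineThrough hP⟩
  · exact ⟨0, iff_of_false (not_not.2 rfl) hP, fun h => absurd h hP⟩

variable {N : ℕ} {l : Fin N → Set (Fin d → F)} {P : Fin d → F} {u : Fin N → Fin d → F}

theorem jthMin_succ_le {V : Submodule F (Fin d → F)} {j : ℕ} (hV : finrank F V = j) :
    jthMin l P (j + 1) ≤ {i | P ∈ l i ∧ ¬ LineParallel (l i) V}.ncard :=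
  Nat.sInf_le ⟨V, by simp [hV], rfl⟩

theorem exists_jthMin_succ_eq {j : ℕ} (hj : j ≤ d) :
    ∃ V : Submodule F (Fin d → F), finrank F V = j ∧
      jthMin l P (j + 1) = {i | P ∈ l i ∧ ¬ LineParallel (l i) V}.ncard := by
  obtain ⟨V, hV⟩ := exists_submodule_finrank_eq (F := F) (E := Fin d → F)
    (hj.trans_eq (finrank_fin_fun F).symm)
  obtain ⟨W, hW, hmin⟩ := Nat.sInf_mem (⟨_, V, by simp [hV], rfl⟩ :
    {k : ℕ | ∃ V : Submodule F (Fin d → F), finrank F V = j + 1 - 1 ∧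
      k = {i | P ∈ l i ∧ ¬ LineParallel (l i) V}.ncard}.Nonempty)
  exact ⟨W, by simpa using hW, hmin⟩

open Classical in
theorem ncard_not_lineParallel_eq (hu₀ : ∀ i, u i ≠ 0 ↔ P ∈ l i)
    (hu : ∀ i, P ∈ l i → l i = lineThrough P (u i)) (V : Submodule F (Fin d → F)) :
    {i | P ∈ l i ∧ ¬ LineParallel (l i) V}.ncard = #{i | u i ∉ V} := by
  rw [← Set.ncard_coe_finset]
  congr 1
  ext i
  simp only [coe_filter, mem_univ, true_and, Set.mem_ofPred_eq]
  by_cases hP : P ∈ l i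
  · rw [hu i hP, lineParallel_lineThrough_iff ((hu₀ i).2 hP)]
    simp [mem_lineThrough_self]
  · have : u i = 0 := not_not.1 (mt (hu₀ i).1 hP)
    simp [hP, this]

theorem jointMult_eq_card_indepTuples (hu₀ : ∀ i, u i ≠ 0 ↔ P ∈ l i)
    (hu : ∀ i, P ∈ l i → l i = lineThrough P (u i)) : jointMult l P = #(indepTuples F u d) := by
  rw [jointMult, ← Set.ncard_coe_finset]
  congr 1
  ext τ
  simp only [Set.mem_ofPred_eq, mem_coe, mem_indepTuples]
  constructor
  · rintro ⟨v, hv, hvl⟩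
    have hP (j : Fin d) : P ∈ l (τ j) := (hvl j) ▸ mem_lineThrough_self P (v j)
    choose c hc using fun j => exists_unit_smul_of_lineThrough_eq ((hu₀ _).2 (hP j))
      ((hvl j).symm.trans (hu _ (hP j)))
    rw [show u ∘ τ = c • v from funext hc]
    exact hv.units_smul c
  · intro hli
    exact ⟨u ∘ τ, hli, fun j => hu _ ((hu₀ _).1 (hli.ne_zero j))⟩

theorem prod_jthMin_le_jointMult (hl : ∀ i, IsLine (l i)) (P : Fin d → F) :
    ∏ j ∈ Icc 1 d, jthMin l P j ≤ jointMult l P := by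
  classical
  choose u hu₀ hu using fun i => (hl i).exists_direction P
  rw [prod_Icc_one_eq_prod_range, jointMult_eq_card_indepTuples hu₀ hu]
  exact prod_le_card_indepTuples u _ d fun k _ V hV =>
    (jthMin_succ_le hV).trans (ncard_not_lineParallel_eq hu₀ hu V).le

theorem jointMult_le_factorial_mul_prod_jthMin (hl : ∀ i, IsLine (l i)) (P : Fin d → F) :
    jointMult l P ≤ d ! * ∏ j ∈ Icc 1 d, jthMin l P j := by
  classical
  choose u hu₀ hu using fun i => (hl i).exists_direction P
  choose! W hW using fun j (hj : j < d) => exists_jthMin_succ_eq (l := l) (P := P) hj.le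
  rw [prod_Icc_one_eq_prod_range, jointMult_eq_card_indepTuples hu₀ hu]
  calc #(indepTuples F u d) ≤ d ! * ∏ j ∈ range d, #{i | u i ∉ W j} :=
        card_indepTuples_le u d W fun j hj => (hW j hj).1.le
    _ = d ! * ∏ j ∈ range d, jthMin l P (j + 1) := by
      congr 1
      exact prod_congr rfl fun j hj =>
        ((hW j (mem_range.1 hj)).2.trans (ncard_not_lineParallel_eq hu₀ hu _)).symm

end Lines

theorem stmt11_general (d : ℕ) :
    ∃ c C : ℝ, 0 < c ∧ 0 < C ∧
      ∀ (F : Type) [Field F] (N : ℕ) (l : Fin N → Set (Fin d → F)),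
        (∀ i, IsLine (l i)) →
        ∀ P : Fin d → F,
          c * ∏ j ∈ Finset.Icc 1 d, (jthMin l P j : ℝ) ≤ (jointMult l P : ℝ) ∧
          (jointMult l P : ℝ) ≤ C * ∏ j ∈ Finset.Icc 1 d, (jthMin l P j : ℝ) := by
  refine ⟨1, d !, one_pos, by positivity, fun F _ N l hl P => ⟨?_, ?_⟩⟩
  · rw [one_mul]
    exact_mod_cast prod_jthMin_le_jointMult hl P
  · exact_mod_cast jointMult_le_factorial_mul_prod_jthMin hl P

/-- `M(P) ∼ ∏_{j=1}^d r_j(P, L)`. -/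
theorem stmt11 (d : ℕ) (hd : 2 ≤ d) :
    ∃ c C : ℝ, 0 < c ∧ 0 < C ∧
      ∀ (F : Type) [Field F] (N : ℕ) (l : Fin N → Set (Fin d → F)),
        (∀ i, IsLine (l i)) →
        ∀ P : Fin d → F,
          c * ∏ j ∈ Finset.Icc 1 d, (jthMin l P j : ℝ) ≤ (jointMult l P : ℝ) ∧
          (jointMult l P : ℝ) ≤ C * ∏ j ∈ Finset.Icc 1 d, (jthMin l P j : ℝ) :=
  stmt11_general d
end
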